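/- arXiv:1903.06721 — 2 statements merged into one kernel-verified Lean document; each statement's English description precedes it below -/
import Mathlib

section
/- Let d ≥ 1 and let ψ : Fin (d^2) → EuclideanSpace ℂ (Fin d) be a SIC with Gram matrix G, and set Q = ((d+1)/(2d)) • (G ∘ G). Then H = 2 • Q − 1 (where 1 is the d² × d² identity matrix) is Hermitian, satisfies H * H = 1 (so H is unitary), every entry of H has absolute value 1/d, every diagonal entry of H equals 1/d (in particular the diagonal is real and positive), and the trace of H equals d. -/
/-!
The vectors `ψ j ⊗ ψ j` lie in the symmetric square of `ℂ^d`, of dimension `D = d(d+1)/2`, and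
their Gram matrix is `G ∘ G`. Writing `T = ∑ⱼ (ψ j ⊗ ψ j)(ψ j ⊗ ψ j)ᴴ`, `P` for the projection
onto the symmetric square and `N = d²`, the Frobenius norm `‖T - (N/D) P‖²` expands to
`∑ⱼₖ |G j k|⁴ - N²/D`, which vanishes because a SIC attains the Welch bound. So `T = (N/D) P`,
hence `(G ∘ G)² = (2d/(d+1)) (G ∘ G)`: `Q` is an orthogonal projection and `H = 2Q - 1` a
Hermitian involution. The entries of `H` are read off from `|G j k|² = 1/(d+1)`.
-/

open Matrix
open scoped InnerProductSpace ComplexOrder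

theorem IsIdempotentElem.two_smul_sub_one_mul_self {S R : Type*} [Semiring S] [Ring R]
    [Module S R] {p : R} (hp : IsIdempotentElem p) : ((2 : S) • p - 1) * ((2 : S) • p - 1) = 1 := by
  simp only [two_smul, sub_mul, mul_sub, add_mul, mul_add, hp.eq, one_mul, mul_one]
  abel

theorem isIdempotentElem_inv_smul_of_mul_self_eq_smul {K R : Type*} [Field K] [Ring R]
    [Algebra K R] {a : R} {c : K} (h : a * a = c • a) : IsIdempotentElem (c⁻¹ • a) := by
  rw [IsIdempotentElem, smul_mul_smul_comm, h, smul_smul]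
  rcases eq_or_ne c 0 with rfl | hc
  · simp
  · rw [inv_mul_cancel_right₀ hc]

namespace Matrix

variable {𝕜 m ι : Type*} [RCLike 𝕜]

section Frame

variable [Fintype m] [Fintype ι]

theorem IsHermitian.eq_zero_of_trace_mul_self_eq_zero {X : Matrix m m 𝕜} (hX : X.IsHermitian)
    (h : (X * X).trace = 0) : X = 0 := by
  rw [← trace_conjTranspose_mul_self_eq_zero_iff, hX.eq]
  exact h

theorem IsHermitian.trace_mul_self {A : Matrix ι ι 𝕜} (hA : A.IsHermitian) :
    (A * A).trace = ∑ j, ∑ k, ((‖A j k‖ ^ 2 : ℝ) : 𝕜) := by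
  refine Finset.sum_congr rfl fun j _ => Finset.sum_congr rfl fun k _ => ?_
  change A j k * A k j = _
  rw [← hA.apply k j, RCLike.star_def, RCLike.mul_conj]
  norm_cast

/-- `‖U Uᴴ - c P‖²` expands into the left-hand side of `h`. -/
theorem mul_conjTranspose_eq_smul_of_trace_eq_zero {U : Matrix m ι 𝕜} {P : Matrix m m 𝕜}
    (hP : P.IsHermitian) (hPP : P * P = P) (hPU : P * U = U) (c : ℝ)
    (h : (Uᴴ * U * (Uᴴ * U)).trace - 2 * c * (Uᴴ * U).trace + c ^ 2 * P.trace = 0) :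
    U * Uᴴ = (c : 𝕜) • P := by
  have hUP : U * Uᴴ * P = U * Uᴴ := by
    rw [Matrix.mul_assoc, ← hP.eq, ← conjTranspose_mul, hPU]
  have hX : (U * Uᴴ - (c : 𝕜) • P).IsHermitian :=
    (isHermitian_mul_conjTranspose_self U).sub (hP.smul (RCLike.conj_ofReal c))
  rw [← sub_eq_zero]
  refine hX.eq_zero_of_trace_mul_self_eq_zero ?_
  have hexpand : (U * Uᴴ - (c : 𝕜) • P) * (U * Uᴴ - (c : 𝕜) • P)
      = U * (Uᴴ * U * Uᴴ) - (2 * c : 𝕜) • (U * Uᴴ) + ((c : 𝕜) ^ 2) • P := by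
    simp only [sub_mul, mul_sub, Matrix.smul_mul, Matrix.mul_smul, hUP, Matrix.mul_assoc,
      ← Matrix.mul_assoc P, hPU, hPP, smul_smul]
    module
  rw [hexpand, trace_add, trace_sub, trace_smul, trace_smul, trace_mul_comm U, trace_mul_comm U,
    ← h]
  simp only [Matrix.mul_assoc, smul_eq_mul]

theorem conjTranspose_mul_self_mul_self_of_mul_conjTranspose_eq_smul {U : Matrix m ι 𝕜}
    {P : Matrix m m 𝕜} (hPU : P * U = U) {c : 𝕜} (h : U * Uᴴ = c • P) :
    Uᴴ * U * (Uᴴ * U) = c • (Uᴴ * U) := by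
  rw [Matrix.mul_assoc, ← Matrix.mul_assoc U, h, Matrix.smul_mul, hPU, Matrix.mul_smul]

end Frame

section Symmetrizer

variable [DecidableEq m]

variable (𝕜) in
def symmetrizer (σ : Equiv.Perm m) : Matrix m m 𝕜 := (2⁻¹ : 𝕜) • (1 + σ.permMatrix 𝕜)

variable {σ : Equiv.Perm m}

theorem isHermitian_symmetrizer (hσ : σ * σ = 1) : (symmetrizer 𝕜 σ).IsHermitian := by
  rw [IsHermitian, symmetrizer, conjTranspose_smul, conjTranspose_add, conjTranspose_one,
    conjTranspose_permMatrix, inv_eq_of_mul_eq_one_left hσ]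
  simp

variable [Fintype m]

theorem symmetrizer_mul_self (hσ : σ * σ = 1) :
    symmetrizer 𝕜 σ * symmetrizer 𝕜 σ = symmetrizer 𝕜 σ := by
  have hS : σ.permMatrix 𝕜 * σ.permMatrix 𝕜 = 1 := by rw [← permMatrix_mul, hσ, permMatrix_one]
  simp only [symmetrizer, Matrix.smul_mul, Matrix.mul_smul, add_mul, mul_add, hS, one_mul,
    mul_one]
  module

theorem symmetrizer_mul_of_forall_apply_eq {U : Matrix m ι 𝕜} (hU : ∀ i, U (σ i) = U i) :
    symmetrizer 𝕜 σ * U = U := by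
  have hSU : σ.permMatrix 𝕜 * U = U := by
    rw [Equiv.Perm.permMatrix, PEquiv.toMatrix_toPEquiv_mul]
    ext i j
    simp [hU]
  rw [symmetrizer, Matrix.smul_mul, Matrix.add_mul, Matrix.one_mul, hSU, ← two_smul 𝕜 U,
    smul_smul, inv_mul_cancel₀ two_ne_zero, one_smul]

theorem trace_symmetrizer_prodComm {n : Type*} [Fintype n] [DecidableEq n] :
    (symmetrizer 𝕜 (Equiv.prodComm n n)).trace = Fintype.card n * (Fintype.card n + 1) / 2 := by
  have hdiag : ∀ a b : n, (b = a ∧ a = b) ↔ b = a := fun a b => ⟨And.left, fun h => ⟨h, h.symm⟩⟩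
  have hS : (Equiv.Perm.permMatrix 𝕜 (Equiv.prodComm n n)).trace = Fintype.card n := by
    rw [trace, Fintype.sum_prod_type]
    simp [PEquiv.toMatrix_apply, hdiag]
  rw [symmetrizer, trace_smul, trace_add, trace_one, hS, Fintype.card_prod, smul_eq_mul]
  push_cast
  ring

end Symmetrizer

end Matrix

section TensorSquare

variable {𝕜 n ι : Type*} [RCLike 𝕜] [Fintype n]

/-- Column `j` is `ψ j ⊗ ψ j`, indexed by `n × n`. -/
def tensorSquareMatrix (ψ : ι → EuclideanSpace 𝕜 n) : Matrix (n × n) ι 𝕜 :=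
  of fun p j => ψ j p.1 * ψ j p.2

theorem conjTranspose_tensorSquareMatrix_mul_self (ψ : ι → EuclideanSpace 𝕜 n) :
    (tensorSquareMatrix ψ)ᴴ * tensorSquareMatrix ψ = gram 𝕜 ψ ⊙ gram 𝕜 ψ := by
  ext j k
  simp only [mul_apply, conjTranspose_apply, tensorSquareMatrix, of_apply, hadamard_apply,
    gram_apply, EuclideanSpace.inner_eq_star_dotProduct, dotProduct, Fintype.sum_prod_type,
    Finset.sum_mul_sum, star_mul', Pi.star_apply]
  exact Finset.sum_congr rfl fun a _ => Finset.sum_congr rfl fun b _ => by ring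

variable [DecidableEq n]

theorem symmetrizer_prodComm_mul_tensorSquareMatrix (ψ : ι → EuclideanSpace 𝕜 n) :
    symmetrizer 𝕜 (Equiv.prodComm n n) * tensorSquareMatrix ψ = tensorSquareMatrix ψ :=
  symmetrizer_mul_of_forall_apply_eq fun _ => funext fun _ => mul_comm _ _

variable [Fintype ι]

/-- Families attaining the Welch bound `∑ⱼₖ |⟪ψ j, ψ k⟫|⁴ ≥ N² / D` (projective 2-designs). -/
theorem hadamard_gram_mul_self_of_sum_norm_inner_pow_four {ψ : ι → EuclideanSpace 𝕜 n}
    (hψ : ∀ j, ‖ψ j‖ = 1)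
    (hF : ∑ j, ∑ k, ‖⟪ψ j, ψ k⟫_𝕜‖ ^ 4 =
      (Fintype.card ι : ℝ) ^ 2 / (Fintype.card n * (Fintype.card n + 1) / 2)) :
    (gram 𝕜 ψ ⊙ gram 𝕜 ψ) * (gram 𝕜 ψ ⊙ gram 𝕜 ψ) =
      ((Fintype.card ι / (Fintype.card n * (Fintype.card n + 1) / 2) : ℝ) : 𝕜) •
        (gram 𝕜 ψ ⊙ gram 𝕜 ψ) := by
  set N : ℝ := (Fintype.card ι : ℝ)
  set D : ℝ := (Fintype.card n : ℝ) * (Fintype.card n + 1) / 2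
  have hA : (gram 𝕜 ψ ⊙ gram 𝕜 ψ).IsHermitian :=
    (isHermitian_gram 𝕜 ψ).hadamard (isHermitian_gram 𝕜 ψ)
  have htrace_sq :
      (gram 𝕜 ψ ⊙ gram 𝕜 ψ * (gram 𝕜 ψ ⊙ gram 𝕜 ψ)).trace = ((N ^ 2 / D : ℝ) : 𝕜) := by
    rw [hA.trace_mul_self, ← hF]
    push_cast
    refine Finset.sum_congr rfl fun j _ => Finset.sum_congr rfl fun k _ => ?_
    rw [hadamard_apply, gram_apply, norm_mul]
    push_cast
    ring
  have htrace : (gram 𝕜 ψ ⊙ gram 𝕜 ψ).trace = N := by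
    simp [trace, hadamard_apply, inner_self_eq_norm_sq_to_K, hψ, N]
  have hP : (symmetrizer 𝕜 (Equiv.prodComm n n)).trace = D := by
    rw [trace_symmetrizer_prodComm]
    simp only [D]
    push_cast
    ring
  have hreal : N ^ 2 / D - 2 * (N / D) * N + (N / D) ^ 2 * D = 0 := by
    rcases eq_or_ne D 0 with hD | hD
    · simp [hD]
    · field_simp
      ring
  have hinvol : Equiv.prodComm n n * Equiv.prodComm n n = 1 := by ext <;> rfl
  have hframe := mul_conjTranspose_eq_smul_of_trace_eq_zero (isHermitian_symmetrizer hinvol)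
    (symmetrizer_mul_self hinvol) (symmetrizer_prodComm_mul_tensorSquareMatrix ψ) (N / D) (by
      rw [conjTranspose_tensorSquareMatrix_mul_self, htrace_sq, htrace, hP]
      exact_mod_cast hreal)
  simpa only [conjTranspose_tensorSquareMatrix_mul_self] using
    conjTranspose_mul_self_mul_self_of_mul_conjTranspose_eq_smul
      (symmetrizer_prodComm_mul_tensorSquareMatrix ψ) hframe

end TensorSquare

section Equiangular

variable {𝕜 n ι : Type*} [RCLike 𝕜] [Fintype n] [Fintype ι]

theorem sum_norm_inner_pow_four_of_equiangular {ψ : ι → EuclideanSpace 𝕜 n}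
    (hψ : ∀ j, ‖ψ j‖ = 1) {α : ℝ} (hα : ∀ j k, j ≠ k → ‖⟪ψ j, ψ k⟫_𝕜‖ ^ 2 = α) :
    ∑ j, ∑ k, ‖⟪ψ j, ψ k⟫_𝕜‖ ^ 4 =
      Fintype.card ι ^ 2 * α ^ 2 + Fintype.card ι * (1 - α ^ 2) := by
  classical
  have hentry : ∀ j k, ‖⟪ψ j, ψ k⟫_𝕜‖ ^ 4 = α ^ 2 + if j = k then 1 - α ^ 2 else 0 := by
    intro j k
    split_ifs with hjk
    · simp [hjk, inner_self_eq_norm_sq_to_K, hψ]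
    · rw [← hα j k hjk]
      ring
  simp only [hentry, Finset.sum_add_distrib, Finset.sum_const, Finset.card_univ, nsmul_eq_mul,
    Finset.sum_ite_eq, Finset.mem_univ, if_true]
  ring

end Equiangular

theorem hadamard_gram_mul_self_of_isSIC {d : ℕ} {ψ : Fin (d ^ 2) → EuclideanSpace ℂ (Fin d)}
    (hψ : ∀ j, ‖ψ j‖ = 1) (hsic : ∀ j k, j ≠ k → ‖⟪ψ j, ψ k⟫_ℂ‖ ^ 2 = 1 / (d + 1)) :
    (gram ℂ ψ ⊙ gram ℂ ψ) * (gram ℂ ψ ⊙ gram ℂ ψ) =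
      (2 * d / (d + 1) : ℂ) • (gram ℂ ψ ⊙ gram ℂ ψ) := by
  have hc : (d : ℝ) ^ 2 / (d * (d + 1) / 2) = 2 * d / (d + 1) := by
    rcases eq_or_ne d 0 with rfl | hd
    · simp
    · field_simp
  have hF : ∑ j, ∑ k, ‖⟪ψ j, ψ k⟫_ℂ‖ ^ 4 = ((d : ℝ) ^ 2) ^ 2 / (d * (d + 1) / 2) := by
    rw [sum_norm_inner_pow_four_of_equiangular hψ hsic, Fintype.card_fin, pow_two ((d : ℝ) ^ 2),
      mul_div_assoc, hc]
    push_cast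
    field_simp
    ring
  convert hadamard_gram_mul_self_of_sum_norm_inner_pow_four hψ (by simpa using hF) using 2
  simp [hc]

theorem stmt_1_general (d : ℕ)
    (ψ : Fin (d ^ 2) → EuclideanSpace ℂ (Fin d))
    (hunit : ∀ j, ‖ψ j‖ = 1)
    (hsic : ∀ j k, j ≠ k →
      ‖(inner ℂ (ψ j) (ψ k) : ℂ)‖ ^ 2 = 1 / (d + 1))
    (G : Matrix (Fin (d ^ 2)) (Fin (d ^ 2)) ℂ)
    (hG : ∀ j k, G j k = (inner ℂ (ψ j) (ψ k) : ℂ))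
    (Q : Matrix (Fin (d ^ 2)) (Fin (d ^ 2)) ℂ)
    (hQ : Q = (((d : ℂ) + 1) / (2 * d)) • Matrix.hadamard G G)
    (H : Matrix (Fin (d ^ 2)) (Fin (d ^ 2)) ℂ)
    (hH : H = (2 : ℂ) • Q - 1) :
    H.IsHermitian ∧ H * H = 1 ∧
    (∀ p q, ‖H p q‖ = 1 / d) ∧
    (∀ p, H p p = 1 / d) ∧
    H.trace = d := by
  obtain rfl : G = gram ℂ ψ := Matrix.ext hG
  have hQQ : IsIdempotentElem Q := by
    rw [hQ, ← inv_div]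
    exact isIdempotentElem_inv_smul_of_mul_self_eq_smul
      (hadamard_gram_mul_self_of_isSIC hunit hsic)
  have hentry : ∀ p q, H p q = ((d : ℂ) + 1) / d * gram ℂ ψ p q ^ 2 - (1 : Matrix _ _ ℂ) p q := by
    intro p q
    rw [hH, hQ]
    simp only [Matrix.sub_apply, Matrix.smul_apply, hadamard_apply, smul_eq_mul]
    ring
  have hdiag : ∀ p, H p p = 1 / d := by
    intro p
    have hd : (d : ℂ) ≠ 0 := Nat.cast_ne_zero.2 (by rintro rfl; exact p.elim0)
    rw [hentry, gram_apply, inner_self_eq_norm_sq_to_K, hunit, one_apply_eq]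
    simp only [RCLike.ofReal_one, one_pow, mul_one]
    field_simp
    ring
  refine ⟨?_, hH ▸ hQQ.two_smul_sub_one_mul_self, fun p q => ?_, hdiag, ?_⟩
  · have hA := (isHermitian_gram ℂ ψ).hadamard (isHermitian_gram ℂ ψ)
    rw [hH, hQ]
    exact ((hA.smul (by simp [IsSelfAdjoint])).smul (by simp [IsSelfAdjoint])).sub isHermitian_one
  · rcases eq_or_ne p q with rfl | hpq
    · simp [hdiag]
    · rw [hentry, one_apply_ne hpq, sub_zero, norm_mul, norm_pow, gram_apply, hsic p q hpq,
        norm_div, ← Nat.cast_succ, Complex.norm_natCast, Complex.norm_natCast]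
      push_cast
      field_simp
  · simp only [trace, diag_apply, hdiag, Finset.sum_const, Finset.card_univ, Fintype.card_fin,
      nsmul_eq_mul, Nat.cast_pow, one_div]
    rw [sq, mul_self_mul_inv]

/-- For a SIC in dimension `d` with Gram matrix `G` and
`Q = ((d+1)/(2d)) • (G ∘ G)`, the matrix `H = 2 • Q - 1` is Hermitian, satisfies `H * H = 1`,
all its entries have absolute value `1/d`, all its diagonal entries equal `1/d`
(in particular the diagonal is real and positive), and `Tr H = d`. -/
theorem stmt_1 (d : ℕ) (hd : 1 ≤ d)
    (ψ : Fin (d ^ 2) → EuclideanSpace ℂ (Fin d))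
    (hunit : ∀ j, ‖ψ j‖ = 1)
    (hsic : ∀ j k, j ≠ k →
      ‖(inner ℂ (ψ j) (ψ k) : ℂ)‖ ^ 2 = 1 / (d + 1))
    (G : Matrix (Fin (d ^ 2)) (Fin (d ^ 2)) ℂ)
    (hG : ∀ j k, G j k = (inner ℂ (ψ j) (ψ k) : ℂ))
    (Q : Matrix (Fin (d ^ 2)) (Fin (d ^ 2)) ℂ)
    (hQ : Q = (((d : ℂ) + 1) / (2 * d)) • Matrix.hadamard G G)
    (H : Matrix (Fin (d ^ 2)) (Fin (d ^ 2)) ℂ)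
    (hH : H = (2 : ℂ) • Q - 1) :
    H.IsHermitian ∧ H * H = 1 ∧
    (∀ p q, ‖H p q‖ = 1 / d) ∧
    (∀ p, H p p = 1 / d) ∧
    H.trace = d :=
  stmt_1_general d ψ hunit hsic G hG Q hQ H hH
end

section
/- For d = 4 and every t ∈ ℝ, define M(t) : (ZMod 4)² → ℂ by the table M(t)_{p₁,p₂} (rows indexed by p₁ = 0,1,2,3, columns by p₂ = 0,1,2,3): row 0: 1, e^{−it}, 1, e^{it}; row 1: e^{−it}, e^{it}, e^{it}, e^{it}; row 2: 1, e^{−it}, 1, e^{it}; row 3: e^{it}, e^{−it}, e^{−it}, e^{−it}. Then for every t ∈ ℝ and every p ∈ (ZMod 4)², ∑_{r ∈ (ZMod 4)²} i^{−(p₂r₁ − p₁r₂)} · (M(t) (p − r)) · (M(t) r) = 16 · δ_{p,0}. Consequently the 16 × 16 matrix H(t) with entries H(t) p q = (1/4) · i^{−(p₂q₁ − p₁q₂)} · M(t) (p − q) is, for every t, a Hermitian complex Hadamard matrix: Hermitian, satisfying H(t) * H(t) = 1, with all entries of absolute value 1/4 and trace 4. -/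
/-!
Write `ω(p, q) = p₁q₂ - p₂q₁` and `ε` for the `±1, 0` exponent table, so `M(t)_p = e^{i t ε(p)}`.
For any `M` with `M(-p) = conj M(p)`, the matrix `(1/4) i^{ω(p,q)} M(p-q)` is Hermitian, and by
the cocycle identity `ω(p,r) + ω(r,q) = ω(p,q) + ω(p-q, r-q)` its square is
`(1/16) i^{ω(p,q)} (M ⋆ M)(p-q)`, where `(M ⋆ M)(p) = ∑_r i^{ω(p,r)} M(p-r) M(r)` is the twisted
convolution. For the table at hand, `(M ⋆ M)(p)` is a Laurent polynomial in `e^{it}` of degree at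
most `2` whose coefficients are sums of powers of `i`; a finite computation shows that all of them
vanish except the constant term at `p = 0`, which is `16`.
-/

open Matrix Finset Complex

section SymplecticForm

variable {R : Type*} [CommRing R]

def sympForm (p q : R × R) : R := p.1 * q.2 - p.2 * q.1

@[simp] lemma sympForm_self (p : R × R) : sympForm p p = 0 := by
  simp only [sympForm]; ring

lemma sympForm_swap (p q : R × R) : sympForm q p = -sympForm p q := by
  simp only [sympForm]; ring

lemma sympForm_add_sympForm (p q r : R × R) :
    sympForm p r + sympForm r q = sympForm p q + sympForm (p - q) (r - q) := by
  simp only [sympForm, Prod.fst_sub, Prod.snd_sub]; ring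

end SymplecticForm

section PowVal

variable {n : ℕ} [NeZero n]

lemma pow_zmod_val_add {M : Type*} [Monoid M] {x : M} (hx : x ^ n = 1) (a b : ZMod n) :
    x ^ (a + b).val = x ^ a.val * x ^ b.val := by
  rw [← pow_add, ZMod.val_add, ← pow_eq_pow_mod _ hx]

lemma pow_zmod_val_neg {M : Type*} [DivisionMonoid M] {x : M} (hx : x ^ n = 1) (a : ZMod n) :
    x ^ (-a).val = (x ^ a.val)⁻¹ :=
  eq_inv_of_mul_eq_one_left <| by
    rw [← pow_zmod_val_add hx, neg_add_cancel, ZMod.val_zero, pow_zero]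

end PowVal

lemma Finset.sum_mul_comp_eq_of_sum_fiberwise {α β R : Type*} [Fintype α] [DecidableEq β]
    [NonAssocSemiring R] {f : α → R} {e : α → β} {g : β → R} {t : Finset β} {b₀ : β} {c : R}
    (he : ∀ a, e a ∈ t) (hb₀ : b₀ ∈ t)
    (hf : ∀ b ∈ t, ∑ a with e a = b, f a = if b = b₀ then c else 0) :
    ∑ a, f a * g (e a) = c * g b₀ := by
  rw [← sum_fiberwise_of_maps_to (fun a _ => he a)]
  calc ∑ b ∈ t, ∑ a with e a = b, f a * g (e a)
      = ∑ b ∈ t, (∑ a with e a = b, f a) * g b :=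
        sum_congr rfl fun b _ => by
          rw [sum_mul]; exact sum_congr rfl fun a ha => by rw [(mem_filter.1 ha).2]
    _ = ∑ b ∈ t, (if b = b₀ then c else 0) * g b := sum_congr rfl fun b hb => by rw [hf b hb]
    _ = c * g b₀ := by simp [ite_mul, hb₀]

noncomputable section TwistedMatrix

variable {n : ℕ} (ζ : ℂ)

def twistedMatrix (M : ZMod n × ZMod n → ℂ) : Matrix (ZMod n × ZMod n) (ZMod n × ZMod n) ℂ :=
  of fun p q => (n : ℂ)⁻¹ * ζ ^ (sympForm p q).val * M (p - q)

@[simp] lemma twistedMatrix_apply (M : ZMod n × ZMod n → ℂ) (p q : ZMod n × ZMod n) :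
    twistedMatrix ζ M p q = (n : ℂ)⁻¹ * ζ ^ (sympForm p q).val * M (p - q) := rfl

variable [NeZero n]

def twistedConv (M N : ZMod n × ZMod n → ℂ) (p : ZMod n × ZMod n) : ℂ :=
  ∑ r, ζ ^ (sympForm p r).val * M (p - r) * N r

variable {ζ}

lemma twistedMatrix_mul_apply (hζ : ζ ^ n = 1) (M N : ZMod n × ZMod n → ℂ)
    (p q : ZMod n × ZMod n) :
    (twistedMatrix ζ M * twistedMatrix ζ N) p q =
      (n : ℂ)⁻¹ ^ 2 * ζ ^ (sympForm p q).val * twistedConv ζ M N (p - q) := by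
  have hterm : ∀ r, twistedMatrix ζ M p r * twistedMatrix ζ N r q =
      (n : ℂ)⁻¹ ^ 2 * ζ ^ (sympForm p q).val *
        (ζ ^ (sympForm (p - q) (r - q)).val * M ((p - q) - (r - q)) * N (r - q)) := by
    intro r
    have hphase := congrArg (fun a : ZMod n => ζ ^ a.val) (sympForm_add_sympForm p q r)
    simp only [pow_zmod_val_add hζ] at hphase
    rw [twistedMatrix_apply, twistedMatrix_apply, sub_sub_sub_cancel_right]
    linear_combination (n : ℂ)⁻¹ ^ 2 * M (p - r) * N (r - q) * hphase
  rw [mul_apply, sum_congr rfl fun r _ => hterm r, ← mul_sum, twistedConv]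
  congr 1
  exact Fintype.sum_equiv (Equiv.subRight q) _ _ fun r => rfl

lemma twistedMatrix_mul_self (hζ : ζ ^ n = 1) {M : ZMod n × ZMod n → ℂ}
    (hM : ∀ p, twistedConv ζ M M p = if p = 0 then (n : ℂ) ^ 2 else 0) :
    twistedMatrix ζ M * twistedMatrix ζ M = 1 := by
  ext p q
  rw [twistedMatrix_mul_apply hζ, hM]
  by_cases hpq : p = q
  · subst hpq
    simp [NeZero.ne]
  · simp [sub_eq_zero, hpq, one_apply_ne hpq]

lemma isHermitian_twistedMatrix (hζ : ζ ^ n = 1) {M : ZMod n × ZMod n → ℂ}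
    (hM : ∀ p, M (-p) = star (M p)) : (twistedMatrix ζ M).IsHermitian := by
  have hstar : star ζ = ζ⁻¹ := (inv_eq_conj (norm_eq_one_of_pow_eq_one hζ (NeZero.ne n))).symm
  ext p q
  rw [conjTranspose_apply, twistedMatrix_apply, twistedMatrix_apply, star_mul', star_mul',
    star_pow, hstar, inv_pow, ← pow_zmod_val_neg hζ, ← sympForm_swap, ← hM, neg_sub]
  simp

lemma norm_twistedMatrix_apply (hζ : ζ ^ n = 1) {M : ZMod n × ZMod n → ℂ}
    (hM : ∀ p, ‖M p‖ = 1) (p q : ZMod n × ZMod n) : ‖twistedMatrix ζ M p q‖ = (n : ℝ)⁻¹ := by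
  simp [norm_eq_one_of_pow_eq_one hζ (NeZero.ne n), hM]

lemma trace_twistedMatrix {M : ZMod n × ZMod n → ℂ} (hM : M 0 = 1) :
    (twistedMatrix ζ M).trace = n := by
  simp [trace, hM, ZMod.card]

end TwistedMatrix

def signTable (p : ZMod 4 × ZMod 4) : ℤ :=
  !![0, -1, 0, 1; -1, 1, 1, 1; 0, -1, 0, 1; 1, -1, -1, -1]
    ⟨p.1.val, p.1.val_lt⟩ ⟨p.2.val, p.2.val_lt⟩

lemma signTable_neg (p : ZMod 4 × ZMod 4) : signTable (-p) = -signTable p := by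
  revert p; decide

lemma signTable_sub_add_mem_Icc (p r : ZMod 4 × ZMod 4) :
    signTable (p - r) + signTable r ∈ Icc (-2 : ℤ) 2 := by
  revert p r; decide

/- The coefficient of `e^{ikt}` in the twisted convolution is a Gaussian integer, so `decide` can
compute it in `ℤ[i]`. -/
lemma sum_sqrtd_pow_sympForm_fiber :
    ∀ p : ZMod 4 × ZMod 4, ∀ k ∈ Icc (-2 : ℤ) 2,
      ∑ r with signTable (p - r) + signTable r = k,
          (Zsqrtd.sqrtd : GaussianInt) ^ (sympForm p r).val
        = if k = 0 then (if p = 0 then 16 else 0) else 0 := by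
  decide

lemma sum_I_pow_sympForm_fiber (p : ZMod 4 × ZMod 4) (k : ℤ) (hk : k ∈ Icc (-2 : ℤ) 2) :
    ∑ r with signTable (p - r) + signTable r = k, I ^ (sympForm p r).val
      = if k = 0 then (if p = 0 then 16 else 0) else 0 := by
  have h := congrArg GaussianInt.toComplex (sum_sqrtd_pow_sympForm_fiber p k hk)
  simpa [map_sum, map_pow, GaussianInt.toComplex_def, map_ofNat,
    apply_ite GaussianInt.toComplex] using h

noncomputable def signPhase (t : ℝ) (p : ZMod 4 × ZMod 4) : ℂ :=
  exp (I * t * signTable p)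

lemma signPhase_zero (t : ℝ) : signPhase t 0 = 1 := by
  simp [signPhase, show signTable 0 = 0 from rfl]

lemma norm_signPhase (t : ℝ) (p : ZMod 4 × ZMod 4) : ‖signPhase t p‖ = 1 := by
  rw [signPhase, show I * t * signTable p = ((t * signTable p : ℝ) : ℂ) * I by push_cast; ring]
  exact norm_exp_ofReal_mul_I _

lemma signPhase_neg (t : ℝ) (p : ZMod 4 × ZMod 4) : signPhase t (-p) = star (signPhase t p) := by
  rw [signPhase, signPhase, signTable_neg, star_def, ← exp_conj]
  congr 1
  simp

lemma twistedConv_signPhase (t : ℝ) (p : ZMod 4 × ZMod 4) :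
    twistedConv I (signPhase t) (signPhase t) p = if p = 0 then 16 else 0 := by
  have hmul : ∀ r, signPhase t (p - r) * signPhase t r =
      exp (I * t * ((signTable (p - r) + signTable r : ℤ) : ℂ)) := by
    intro r
    rw [signPhase, signPhase, ← exp_add]
    push_cast; ring_nf
  simp_rw [twistedConv, mul_assoc _ (signPhase t _), hmul]
  rw [sum_mul_comp_eq_of_sum_fiberwise (g := fun k : ℤ => exp (I * t * k))
    (signTable_sub_add_mem_Icc p) (by decide) (sum_I_pow_sympForm_fiber p)]
  simp

/-- For `d = 4`, the one-parameter family of squared-phase matrices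
`M(t)` (given by the table of powers `e^{ε·it}` below) satisfies
`∑_r i^{-(p₂r₁ - p₁r₂)} M(t)(p-r) M(t)(r) = 16 δ_{p,0}` for all `t, p`; consequently
`H(t) p q = (1/4) i^{-(p₂q₁ - p₁q₂)} M(t)(p-q)` is for every `t` a Hermitian complex
Hadamard matrix of order 16 with trace 4. -/
theorem stmt_18
    (M : ℝ → ZMod 4 × ZMod 4 → ℂ)
    (hM : ∀ (t : ℝ) (p : ZMod 4 × ZMod 4),
      M t p = Complex.exp (Complex.I * t *
        ((!![0, -1, 0, 1; -1, 1, 1, 1; 0, -1, 0, 1; 1, -1, -1, -1] :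
            Matrix (Fin 4) (Fin 4) ℤ) ⟨p.1.val, p.1.val_lt⟩ ⟨p.2.val, p.2.val_lt⟩ : ℤ)))
    (H : ℝ → Matrix (ZMod 4 × ZMod 4) (ZMod 4 × ZMod 4) ℂ)
    (hH : ∀ (t : ℝ) (p q : ZMod 4 × ZMod 4),
      H t p q = (1 / 4 : ℂ) * Complex.I ^ ((p.1 * q.2 - p.2 * q.1).val) * M t (p - q)) :
    (∀ (t : ℝ) (p : ZMod 4 × ZMod 4),
      ∑ r : ZMod 4 × ZMod 4,
        Complex.I ^ ((p.1 * r.2 - p.2 * r.1).val) * M t (p - r) * M t r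
        = if p = 0 then 16 else 0) ∧
    ∀ t : ℝ,
      (H t).IsHermitian ∧
      H t * H t = 1 ∧
      (∀ p q, ‖H t p q‖ = 1 / 4) ∧
      (H t).trace = 4 := by
  have hMt : ∀ t, M t = signPhase t := fun t => funext (hM t)
  have hHt : ∀ t, H t = twistedMatrix I (signPhase t) := fun t => by
    ext p q
    rw [hH, hMt, twistedMatrix_apply]
    norm_num [sympForm]
  have hconv : ∀ t p, twistedConv I (signPhase t) (signPhase t) p =
      if p = 0 then ((4 : ℕ) : ℂ) ^ 2 else 0 := fun t p => by
    rw [twistedConv_signPhase]; norm_num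
  refine ⟨fun t p => hMt t ▸ twistedConv_signPhase t p, fun t => ?_⟩
  rw [hHt]
  refine ⟨isHermitian_twistedMatrix I_pow_four (signPhase_neg t),
    twistedMatrix_mul_self I_pow_four (hconv t), fun p q => ?_, ?_⟩
  · rw [norm_twistedMatrix_apply I_pow_four (norm_signPhase t)]; norm_num
  · rw [trace_twistedMatrix (signPhase_zero t)]; norm_num
end
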